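/- Let a, b, j, r be integers with 1 < a ≤ b, j ≥ a, and r ≥ 0. Then for every abelian group A and every function W from partitions to A: ∑_{λ : 1^{j−a}·a·b^r ≤ λ} W(m(λ)) − ∑_{λ : 1^{j}·b^r ≤ λ} W(m(λ)) = ∑_{λ : (1,0)^{j−a}·(a,0)·(0,1)^r ≤ λ} W(m(λ)) − ∑_{λ : (1,0)^{j}·(0,1)^r ≤ λ} W(m(λ)), where the first two sums run over the finitely many multisets of positive integers above the indicated multiset in the refinement order, and the last two sums run over the finitely many multisets of nonzero elements of the commutative monoid ℕ×ℕ above the indicated multiset in the refinement order. (This is Lemma 5.21 of the paper, ǀw̄_{1^{j−a}ab^r} = w̄_{1^j b^r} − w̄_{x^j y^r} + w̄_{x^{j−a}(ax)y^r}ǀ, stated for an arbitrary function W of multiplicity partitions, which is what the paper's bijective proof establishes.) -/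

import Mathlib

/-!
Refining `x^j y^r` in `ℕ × ℕ` produces exactly the multisets of nonzero pairs summing to `(j, r)`;
refining `x^(j-a) (ax) y^r` produces those among them with a part of first coordinate `≥ a`.
The additive map `(p, q) ↦ p + b q` carries the refinements of these two multisets onto the
refinements of `1^j b^r` and `1^(j-a) a b^r`. On the refinements of `x^j y^r` that are not
refinements of `x^(j-a) (ax) y^r` every first coordinate is `< a ≤ b`, so every part is a two-digit
base-`b` numeral: there the map is injective, keeps multiplicities, and lands outside the image of
the smaller set, because another preimage would need a carry, which lowers the sum of the
first coordinates. Both differences are therefore minus the same sum.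
-/

/-- An elementary merge replaces two elements `x`, `y` of a multiset by the single
element `x + y`. -/
def ElemMerge {M : Type*} [AddCommMonoid M] (μ ν : Multiset M) : Prop :=
  ∃ (x y : M) (rest : Multiset M), μ = x ::ₘ y ::ₘ rest ∧ ν = (x + y) ::ₘ rest

/-- The refinement order: `Refines μ λ` iff `λ` can be obtained from `μ` by a finite
(possibly empty) sequence of elementary merges. -/
def Refines {M : Type*} [AddCommMonoid M] : Multiset M → Multiset M → Prop :=
  Relation.ReflTransGen ElemMerge

/-- The multiplicity partition `m(λ)`: the finite multiset of multiplicities with which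
the distinct elements of `λ` occur. -/
noncomputable def multPartition {M : Type*} (lam : Multiset M) : Multiset ℕ :=
  letI := Classical.decEq M
  lam.dedup.map fun x => lam.count x

open Multiset

section RefinementOrder

variable {M N : Type*} [AddCommMonoid M] [AddCommMonoid N] {μ ν : Multiset M}

namespace Refines

protected theorem rfl : Refines μ μ := Relation.ReflTransGen.refl

protected theorem trans {ξ : Multiset M} (h₁ : Refines μ ν) (h₂ : Refines ν ξ) : Refines μ ξ :=
  Relation.ReflTransGen.trans h₁ h₂

theorem add_right (h : Refines μ ν) (s : Multiset M) : Refines (μ + s) (ν + s) := by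
  induction h with
  | refl => exact .refl
  | tail _ h ih =>
    obtain ⟨x, y, rest, rfl, rfl⟩ := h
    exact ih.tail ⟨x, y, rest + s, by simp, by simp⟩

theorem add {μ₁ μ₂ ν₁ ν₂ : Multiset M} (h₁ : Refines μ₁ ν₁) (h₂ : Refines μ₂ ν₂) :
    Refines (μ₁ + μ₂) (ν₁ + ν₂) :=
  (h₁.add_right μ₂).trans (by simpa only [add_comm ν₁] using h₂.add_right ν₁)

theorem sum_eq (h : Refines μ ν) : ν.sum = μ.sum := by
  induction h with
  | refl => rfl
  | tail _ h ih =>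
    obtain ⟨x, y, rest, rfl, rfl⟩ := h
    simpa [add_assoc] using ih

theorem card_le (h : Refines μ ν) : card ν ≤ card μ := by
  induction h with
  | refl => exact le_rfl
  | tail _ h ih =>
    obtain ⟨x, y, rest, rfl, rfl⟩ := h
    simp only [card_cons] at ih ⊢
    omega

theorem map (f : M →+ N) (h : Refines μ ν) : Refines (μ.map f) (ν.map f) := by
  induction h with
  | refl => exact .refl
  | tail _ h ih =>
    obtain ⟨x, y, rest, rfl, rfl⟩ := h
    exact ih.tail ⟨f x, f y, rest.map f, by simp, by simp⟩

theorem exists_map_eq (f : M →+ N) {ν : Multiset N} (h : Refines (μ.map f) ν) :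
    ∃ ν', Refines μ ν' ∧ ν'.map f = ν := by
  classical
  induction h with
  | refl => exact ⟨μ, .refl, rfl⟩
  | tail _ h ih =>
    obtain ⟨ν', hν', rfl⟩ := ih
    obtain ⟨_, _, rest, hxy, rfl⟩ := h
    obtain ⟨x, hx, rfl, hrest⟩ := (map_eq_cons _ _ _ _).2 hxy
    obtain ⟨y, hy, rfl, rfl⟩ := (map_eq_cons _ _ _ _).2 hrest
    refine ⟨(x + y) ::ₘ (ν'.erase x).erase y, hν'.tail ⟨x, y, _, ?_, rfl⟩, by simp⟩
    rw [cons_erase hy, cons_erase hx]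

variable [PartialOrder M] [CanonicallyOrderedAdd M]

theorem zero_notMem (h : Refines μ ν) (hμ : (0 : M) ∉ μ) : (0 : M) ∉ ν := by
  induction h with
  | refl => exact hμ
  | tail _ h ih =>
    obtain ⟨x, y, rest, rfl, rfl⟩ := h
    simp_all [eq_comm]

theorem exists_le_of_mem (h : Refines μ ν) {x : M} (hx : x ∈ μ) : ∃ e ∈ ν, x ≤ e := by
  induction h with
  | refl => exact ⟨x, hx, le_rfl⟩
  | tail _ h ih =>
    obtain ⟨x', y', rest, rfl, rfl⟩ := h
    obtain ⟨e, he, hxe⟩ := ih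
    rcases mem_cons.1 he with rfl | he
    · exact ⟨e + y', mem_cons_self _ _, hxe.trans le_self_add⟩
    rcases mem_cons.1 he with rfl | he
    · exact ⟨x' + e, mem_cons_self _ _, hxe.trans le_add_self⟩
    · exact ⟨e, mem_cons_of_mem he, hxe⟩

end Refines

theorem refines_singleton_sum (h : μ ≠ 0) : Refines μ {μ.sum} := by
  induction μ using Multiset.induction with
  | empty => exact absurd rfl h
  | cons x s ih =>
    rcases eq_or_ne s 0 with rfl | hs
    · simpa using Refines.rfl
    · have h₁ : Refines (x ::ₘ s) (x ::ₘ {s.sum}) := by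
        simpa only [singleton_add] using (Refines.rfl (μ := {x})).add (ih hs)
      exact h₁.tail ⟨x, s.sum, 0, rfl, by simp⟩

theorem setOf_refines_map (f : M →+ N) (μ : Multiset M) :
    {ν | Refines (μ.map f) ν} = Multiset.map f '' {ν | Refines μ ν} := by
  ext ν
  exact ⟨fun h => h.exists_map_eq f, fun ⟨ν', h, hν'⟩ => hν' ▸ h.map f⟩

theorem finite_setOf_refines [PartialOrder M] [CanonicallyOrderedAdd M] [LocallyFiniteOrderBot M]
    (μ : Multiset M) : {ν | Refines μ ν}.Finite := by
  classical
  refine (Set.finite_Iic (card μ • (Finset.Iic μ.sum).val)).subset fun ν hν => ?_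
  rw [Set.mem_Iic, le_iff_count]
  intro e
  by_cases he : e ∈ ν
  · have he' : e ∈ Finset.Iic μ.sum := Finset.mem_Iic.2 (hν.sum_eq ▸ le_sum_of_mem he)
    rw [count_nsmul, count_eq_one_of_mem (Finset.nodup _) he', mul_one]
    exact (count_le_card e ν).trans hν.card_le
  · simp [count_eq_zero_of_notMem he]

end RefinementOrder

section BasisMultiset

def basisMultiset (v : ℕ × ℕ) : Multiset (ℕ × ℕ) := replicate v.1 (1, 0) + replicate v.2 (0, 1)

theorem basisMultiset_add (v w : ℕ × ℕ) :
    basisMultiset (v + w) = basisMultiset v + basisMultiset w := by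
  simp only [basisMultiset, Prod.fst_add, Prod.snd_add, replicate_add]
  abel

@[simp] theorem sum_basisMultiset (v : ℕ × ℕ) : (basisMultiset v).sum = v := by
  simp [basisMultiset, sum_replicate]

theorem zero_notMem_basisMultiset (v : ℕ × ℕ) : (0 : ℕ × ℕ) ∉ basisMultiset v := by
  simp [basisMultiset, mem_replicate, Prod.ext_iff]

theorem refines_basisMultiset_sum {l : Multiset (ℕ × ℕ)} (hl : (0 : ℕ × ℕ) ∉ l) :
    Refines (basisMultiset l.sum) l := by
  induction l using Multiset.induction with
  | empty => exact Refines.rfl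
  | cons e t ih =>
    rw [mem_cons, not_or] at hl
    have he : basisMultiset e ≠ 0 := fun h => hl.1 (by simpa [h] using sum_basisMultiset e)
    have h₁ := refines_singleton_sum he
    rw [sum_basisMultiset] at h₁
    simpa only [sum_cons, basisMultiset_add, singleton_add] using h₁.add (ih hl.2)

theorem refines_basisMultiset_iff {v : ℕ × ℕ} {l : Multiset (ℕ × ℕ)} :
    Refines (basisMultiset v) l ↔ (0 : ℕ × ℕ) ∉ l ∧ l.sum = v := by
  refine ⟨fun h => ⟨h.zero_notMem (zero_notMem_basisMultiset v), by simp [h.sum_eq]⟩, ?_⟩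
  rintro ⟨hl, rfl⟩
  exact refines_basisMultiset_sum hl

theorem refines_basisMultiset_cons {c v : ℕ × ℕ} (hc : c ≠ 0) (hcv : c ≤ v) :
    Refines (basisMultiset v) (c ::ₘ basisMultiset (v - c)) :=
  refines_basisMultiset_iff.2 ⟨by simpa [Ne.symm hc] using zero_notMem_basisMultiset (v - c),
    by simp [add_tsub_cancel_of_le hcv]⟩

theorem refines_cons_basisMultiset_iff {c v : ℕ × ℕ} (hc : c ≠ 0) (hcv : c ≤ v)
    {l : Multiset (ℕ × ℕ)} :
    Refines (c ::ₘ basisMultiset (v - c)) l ↔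
      (0 : ℕ × ℕ) ∉ l ∧ l.sum = v ∧ ∃ e ∈ l, c ≤ e := by
  refine ⟨fun h => ?_, ?_⟩
  · obtain ⟨hl, hsum⟩ := refines_basisMultiset_iff.1 ((refines_basisMultiset_cons hc hcv).trans h)
    exact ⟨hl, hsum, h.exists_le_of_mem (mem_cons_self c _)⟩
  rintro ⟨hl, rfl, e, he, hce⟩
  rw [← cons_erase he] at hl ⊢
  rw [mem_cons, not_or] at hl
  have h₁ : Refines (c ::ₘ basisMultiset (e - c)) {e} := by
    simpa [add_tsub_cancel_of_le hce] using
      refines_singleton_sum (cons_ne_zero (a := c) (m := basisMultiset (e - c)))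
  have hsub : (e ::ₘ l.erase e).sum - c = e - c + (l.erase e).sum := by
    rw [sum_cons, tsub_add_eq_add_tsub hce]
  rw [hsub, basisMultiset_add, ← cons_add, ← singleton_add]
  exact h₁.add (refines_basisMultiset_sum hl.2)

theorem forall_not_le_of_not_refines_cons {c v : ℕ × ℕ} (hc : c ≠ 0) (hcv : c ≤ v)
    {l : Multiset (ℕ × ℕ)} (h₁ : Refines (basisMultiset v) l)
    (h₂ : ¬Refines (c ::ₘ basisMultiset (v - c)) l) : ∀ e ∈ l, ¬c ≤ e := fun e he hce =>
  h₂ ((refines_cons_basisMultiset_iff hc hcv).2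
    ⟨(refines_basisMultiset_iff.1 h₁).1, (refines_basisMultiset_iff.1 h₁).2, e, he, hce⟩)

end BasisMultiset

section OfDigits

variable {b : ℕ}

def ofDigitsHom (b : ℕ) : ℕ × ℕ →+ ℕ := AddMonoidHom.fst ℕ ℕ + b • AddMonoidHom.snd ℕ ℕ

@[simp] theorem ofDigitsHom_apply (v : ℕ × ℕ) : ofDigitsHom b v = v.1 + b * v.2 := rfl

theorem ofDigitsHom_mod_div {v : ℕ × ℕ} (hv : v.1 < b) :
    (ofDigitsHom b v % b, ofDigitsHom b v / b) = v := by
  have hb : 0 < b := by omega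
  simp [Nat.add_mul_div_left _ _ hb, Nat.mod_eq_of_lt hv, Nat.div_eq_of_lt hv]

theorem injOn_ofDigitsHom : Set.InjOn (ofDigitsHom b) {v | v.1 < b} := fun v hv w hw h => by
  rw [← ofDigitsHom_mod_div hv, ← ofDigitsHom_mod_div hw, h]

theorem map_ofDigitsHom_mod_div {l : Multiset (ℕ × ℕ)} (hl : ∀ v ∈ l, v.1 < b) :
    (l.map (ofDigitsHom b)).map (fun n => (n % b, n / b)) = l := by
  rw [Multiset.map_map]
  exact (map_congr rfl fun v hv => ofDigitsHom_mod_div (hl v hv)).trans (map_id l)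

theorem eq_of_map_ofDigitsHom_eq (hb : 0 < b) {l l' : Multiset (ℕ × ℕ)} (hl : ∀ v ∈ l, v.1 < b)
    (hsum : l'.sum.1 ≤ l.sum.1) (h : l'.map (ofDigitsHom b) = l.map (ofDigitsHom b)) :
    l' = l := by
  have hmod (k : Multiset (ℕ × ℕ)) :
      (k.map fun v => v.1 % b) = (k.map (ofDigitsHom b)).map (· % b) := by
    simp [Multiset.map_map, Function.comp_def]
  have fst_sum (k : Multiset (ℕ × ℕ)) : (k.map Prod.fst).sum = k.sum.1 :=
    (map_multiset_sum (AddMonoidHom.fst ℕ ℕ) k).symm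
  -- Reducing first coordinates mod `b` is invisible after `ofDigitsHom b`, and strict on a
  -- non-digit; so a non-digit in `l'` would push its first-coordinate total above that of `l`.
  have hl' : ∀ v ∈ l', v.1 < b := by
    by_contra! ⟨w, hw, hbw⟩
    have hlt : (l'.map fun v => v.1 % b).sum < (l'.map Prod.fst).sum :=
      sum_lt_sum (fun v _ => Nat.mod_le _ _) ⟨w, hw, (Nat.mod_lt _ hb).trans_le hbw⟩
    have heq : (l.map fun v => v.1 % b) = l.map Prod.fst :=
      map_congr rfl fun v hv => Nat.mod_eq_of_lt (hl v hv)
    rw [hmod, h, ← hmod, heq, fst_sum, fst_sum] at hlt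
    exact hsum.not_gt hlt
  rw [← map_ofDigitsHom_mod_div hl', h, map_ofDigitsHom_mod_div hl]

end OfDigits

theorem multPartition_map {α β : Type*} (f : α → β) (s : Multiset α)
    (hf : Set.InjOn f {x | x ∈ s}) : multPartition (s.map f) = multPartition s := by
  let := Classical.decEq α
  let := Classical.decEq β
  have hdedup : (s.map f).dedup = s.dedup.map f :=
    (Nodup.ext (nodup_dedup _) ((nodup_dedup s).map_on fun x hx y hy =>
      hf (mem_dedup.1 hx) (mem_dedup.1 hy))).2 (by simp)
  simp only [multPartition, hdedup, Multiset.map_map]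
  exact map_congr rfl fun x hx => count_map_eq_count f s hf x (mem_dedup.1 hx)

theorem finsum_mem_image_sub_finsum_mem_image {α β A : Type*} [AddCommGroup A] {s t : Set α}
    {g : α → β} {F : β → A} {G : α → A} (hst : s ⊆ t) (ht : t.Finite) (hinj : Set.InjOn g (t \ s))
    (hdisj : Disjoint (g '' s) (g '' (t \ s))) (hFG : ∀ x ∈ t \ s, F (g x) = G x) :
    ∑ᶠ y ∈ g '' s, F y - ∑ᶠ y ∈ g '' t, F y = ∑ᶠ x ∈ s, G x - ∑ᶠ x ∈ t, G x := by
  have himage : g '' t = g '' s ∪ g '' (t \ s) := by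
    rw [← Set.image_union, Set.union_sdiff_cancel hst]
  rw [himage, finsum_mem_union hdisj ((ht.subset hst).image g) (ht.sdiff.image g),
    finsum_mem_image hinj, finsum_mem_congr rfl hFG, ← finsum_mem_add_sdiff hst ht]
  abel

/-- Lemma 5.21 of the paper,
`w̄_{1^{j−a}ab^r} − w̄_{1^j b^r} = w̄_{x^{j−a}(ax)y^r} − w̄_{x^j y^r}`,
stated for an arbitrary function `W` of multiplicity partitions; here `x` and `y` are the
generators `(1,0)` and `(0,1)` of `ℕ × ℕ`. -/
theorem stmt4 (a b j r : ℕ) (ha : 1 < a) (hab : a ≤ b) (hj : a ≤ j)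
    {A : Type*} [AddCommGroup A] (W : Multiset ℕ → A) :
    (∑ᶠ lam ∈ {lam : Multiset ℕ |
        Refines (Multiset.replicate (j - a) 1 + (a ::ₘ Multiset.replicate r b)) lam},
      W (multPartition lam))
    - (∑ᶠ lam ∈ {lam : Multiset ℕ |
        Refines (Multiset.replicate j 1 + Multiset.replicate r b) lam},
      W (multPartition lam))
    = (∑ᶠ lam ∈ {lam : Multiset (ℕ × ℕ) |
        Refines (Multiset.replicate (j - a) (1, 0) +
          ((a, 0) ::ₘ Multiset.replicate r (0, 1))) lam},
      W (multPartition lam))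
    - (∑ᶠ lam ∈ {lam : Multiset (ℕ × ℕ) |
        Refines (Multiset.replicate j (1, 0) + Multiset.replicate r (0, 1)) lam},
      W (multPartition lam)) := by
  have hc : ((a, 0) : ℕ × ℕ) ≠ 0 := by simp only [ne_eq, Prod.mk_eq_zero, and_true]; omega
  have hcv : ((a, 0) : ℕ × ℕ) ≤ (j, r) := Prod.mk_le_mk.2 ⟨hj, r.zero_le⟩
  have hsub : (j - a, r) = (j, r) - (a, 0) := by simp
  have hT₂ : replicate (j - a) (1, 0) + ((a, 0) ::ₘ replicate r (0, 1)) =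
      (a, 0) ::ₘ basisMultiset ((j, r) - (a, 0)) := by
    simp [← hsub, basisMultiset]
  have hS₁ : replicate j 1 + replicate r b = (basisMultiset (j, r)).map (ofDigitsHom b) := by
    simp [basisMultiset, map_replicate]
  have hS₂ : replicate (j - a) 1 + (a ::ₘ replicate r b) =
      ((a, 0) ::ₘ basisMultiset ((j, r) - (a, 0))).map (ofDigitsHom b) := by
    simp [← hsub, basisMultiset, map_replicate]
  rw [hT₂, hS₁, hS₂, setOf_refines_map, setOf_refines_map]
  set T₁ := {l | Refines (basisMultiset (j, r)) l}
  set T₂ := {l | Refines ((a, 0) ::ₘ basisMultiset ((j, r) - (a, 0))) l}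
  have hsum {l} (hl : l ∈ T₁) : l.sum = (j, r) := (refines_basisMultiset_iff.1 hl).2
  have hT₂₁ : T₂ ⊆ T₁ := fun l hl => (refines_basisMultiset_cons hc hcv).trans hl
  have hdigits : ∀ l ∈ T₁ \ T₂, ∀ v ∈ l, v.1 < b := fun l hl v hv => by
    have := forall_not_le_of_not_refines_cons hc hcv hl.1 hl.2 v hv
    simp only [Prod.le_def, Nat.zero_le, and_true, not_le] at this
    omega
  have hunique {l l'} (hl : l ∈ T₁ \ T₂) (hl' : l' ∈ T₁)
      (h : l'.map (ofDigitsHom b) = l.map (ofDigitsHom b)) : l' = l :=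
    eq_of_map_ofDigitsHom_eq (by omega) (hdigits l hl) (by rw [hsum hl.1, hsum hl']) h
  refine finsum_mem_image_sub_finsum_mem_image hT₂₁ (finite_setOf_refines _)
    (fun l hl l' hl' h => (hunique hl hl'.1 h.symm).symm) ?_ fun l hl => ?_
  · rw [Set.disjoint_left]
    rintro _ ⟨l', hl', rfl⟩ ⟨l, hl, h⟩
    exact hl.2 (hunique hl (hT₂₁ hl') h.symm ▸ hl')
  · exact congrArg W (multPartition_map _ l (injOn_ofDigitsHom.mono (hdigits l hl)))
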